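/- The map Φ_n is a surjection from ℂ^n onto the set of monic polynomials p ∈ ℂ[z] of degree 2n satisfying the functional equation p(z) = p(1 − z) (i.e. p composed with z ↦ 1 − z equals p), and two tuples a, b ∈ ℂ^n satisfy Φ_n(a) = Φ_n(b) if and only if a and b lie in the same orbit of the hyperoctahedral group W(B_n). -/

import Mathlib

open Polynomial

/-- `Φ_n(a₁, …, a_n) = ∏_{i=1}^n (z − 1/2 + a_i)(z − 1/2 − a_i)`. -/
noncomputable def PhiMap (n : ℕ) (a : Fin n → ℂ) : Polynomial ℂ :=
  ∏ i : Fin n, ((X - C (1/2) + C (a i)) * (X - C (1/2) - C (a i)))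

/-- Two tuples lie in the same orbit of the hyperoctahedral group `W(B_n)` (signed
permutations acting on `ℂⁿ` by permuting the coordinates and changing their signs). -/
def SameBnOrbit (n : ℕ) (a b : Fin n → ℂ) : Prop :=
  ∃ σ : Equiv.Perm (Fin n), ∃ ε : Fin n → ℂ,
    (∀ i, ε i = 1 ∨ ε i = -1) ∧ ∀ i, b i = ε i * a (σ i)

/-! With `S = (z - 1/2)²` one has `Φ_n(a) = Q_a(S)` for `Q_a = ∏ (w - a_i²)`. Invariance under
`z ↦ 1 - z` means that `p` recentred at `1/2` is even, i.e. a polynomial in `S`; so the monic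
symmetric polynomials of degree `2n` are exactly the `Q(S)` with `Q` monic of degree `n`. Over `ℂ`
such a `Q` splits, and square roots of its roots give a preimage. As `Q ↦ Q(S)` is injective,
`Φ_n(a) = Φ_n(b)` iff the multisets `{a_i²}` and `{b_i²}` agree, i.e. iff `b` is a signed
permutation of `a`. -/

theorem Fin.map_univ_eq_map_univ_iff {α : Type*} {n : ℕ} {f g : Fin n → α} :
    Finset.univ.val.map f = Finset.univ.val.map g ↔
      ∃ σ : Equiv.Perm (Fin n), ∀ i, f i = g (σ i) := by
  refine ⟨fun h => ?_, fun ⟨σ, hσ⟩ => ?_⟩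
  · -- sort both tuples along an arbitrary linear order on `α`
    let _ : LinearOrder α := IsWellOrder.linearOrder WellOrderingRel
    rw [Fin.univ_val_map, Fin.univ_val_map, Multiset.coe_eq_coe] at h
    have hsorted : f ∘ Tuple.sort f = g ∘ Tuple.sort g :=
      List.ofFn_injective <| List.Perm.eq_of_sortedLE
        (Tuple.monotone_sort f).sortedLE_ofFn (Tuple.monotone_sort g).sortedLE_ofFn
        ((((Tuple.sort f).ofFn_comp_perm f).trans h).trans ((Tuple.sort g).ofFn_comp_perm g).symm)
    refine ⟨(Tuple.sort f).symm.trans (Tuple.sort g), fun i => ?_⟩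
    simpa using congrFun hsorted ((Tuple.sort f).symm i)
  · rw [show f = g ∘ σ from funext hσ, ← Multiset.map_map, Multiset.map_univ_val_equiv]

theorem Multiset.exists_map_univ_eq {α : Type*} {m : Multiset α} {n : ℕ} (h : card m = n) :
    ∃ f : Fin n → α, Finset.univ.val.map f = m := by
  obtain ⟨l, rfl⟩ : ∃ l : List α, ↑l = m := ⟨m.toList, m.coe_toList⟩
  rw [coe_card] at h
  subst h
  exact ⟨l.get, by rw [Fin.univ_val_map, List.ofFn_get]⟩

namespace Polynomial

theorem comp_left_injective {R : Type*} [CommRing R] [NoZeroDivisors R] {q : R[X]}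
    (hq : q.natDegree ≠ 0) : Function.Injective fun p : R[X] => p.comp q := by
  intro p₁ p₂ h
  have h0 : (p₁ - p₂).comp q = 0 := by simp only [sub_comp, h, sub_self]
  rcases comp_eq_zero_iff.mp h0 with h1 | ⟨-, h1⟩
  · exact sub_eq_zero.mp h1
  · exact absurd (congrArg natDegree h1) (by rwa [natDegree_C])

theorem prod_X_sub_C_eq_prod_X_sub_C_iff {R ι : Type*} [CommRing R] [IsDomain R] [Fintype ι]
    {f g : ι → R} :
    ∏ i, (X - C (f i)) = ∏ i, (X - C (g i)) ↔
      Finset.univ.val.map f = Finset.univ.val.map g := by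
  have hprod (f : ι → R) :
      ∏ i, (X - C (f i)) = ((Finset.univ.val.map f).map (X - C ·)).prod := by
    rw [Multiset.map_map]; rfl
  refine ⟨fun h => ?_, fun h => by rw [hprod, hprod, h]⟩
  rw [← roots_multiset_prod_X_sub_C (Finset.univ.val.map f),
    ← roots_multiset_prod_X_sub_C (Finset.univ.val.map g), ← hprod, ← hprod, h]

theorem isMonicOfDegree_prod_X_sub_C {R ι : Type*} [CommRing R] [Nontrivial R] [Fintype ι]
    (f : ι → R) : IsMonicOfDegree (∏ i, (X - C (f i))) (Fintype.card ι) :=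
  ⟨natDegree_finsetProd_X_sub_C_eq_card _ _, monic_prod_of_monic _ _ fun _ _ => monic_X_sub_C _⟩

theorem exists_eq_prod_X_sub_C_of_isMonicOfDegree {K : Type*} [Field K] [IsAlgClosed K]
    {q : K[X]} {n : ℕ} (hq : IsMonicOfDegree q n) :
    ∃ c : Fin n → K, q = ∏ i, (X - C (c i)) := by
  have hcard : Multiset.card q.roots = q.natDegree := IsAlgClosed.card_roots_eq_natDegree
  obtain ⟨c, hc⟩ := Multiset.exists_map_univ_eq (hcard.trans hq.natDegree_eq)
  refine ⟨c, ?_⟩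
  rw [← prod_multiset_X_sub_C_of_monic_of_roots_card_eq hq.monic hcard, ← hc, Multiset.map_map]
  rfl

theorem isMonicOfDegree_X_sub_C_sq {R : Type*} [CommRing R] [Nontrivial R] (c : R) :
    IsMonicOfDegree ((X - C c) ^ 2) 2 := by
  simpa using (isMonicOfDegree_X_sub_one c).pow 2

theorem isMonicOfDegree_comp_X_sub_C_sq_iff {R : Type*} [CommRing R] [NoZeroDivisors R]
    [Nontrivial R] {q : R[X]} (c : R) (n : ℕ) :
    IsMonicOfDegree (q.comp ((X - C c) ^ 2)) (2 * n) ↔ IsMonicOfDegree q n := by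
  have hsq := isMonicOfDegree_X_sub_C_sq c
  refine ⟨fun h => ⟨?_, ?_⟩, fun h => mul_comm n 2 ▸ h.comp two_ne_zero hsq⟩
  · have := h.natDegree_eq
    rw [natDegree_comp, hsq.natDegree_eq] at this
    omega
  · have := h.leadingCoeff_eq
    rwa [leadingCoeff_comp (by rw [hsq.natDegree_eq]; exact two_ne_zero), hsq.leadingCoeff_eq,
      one_pow, mul_one] at this

theorem exists_eq_comp_X_sq_of_comp_neg_X_eq {R : Type*} [CommRing R] [NoZeroDivisors R]
    [NeZero (2 : R)] {r : R[X]} (h : r.comp (-X) = r) : ∃ q : R[X], r = q.comp (X ^ 2) := by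
  refine ⟨contract 2 r, ext fun k => ?_⟩
  rw [← expand_eq_comp_X_pow, coeff_expand two_pos, coeff_contract two_ne_zero]
  split_ifs with hk
  · rw [Nat.div_mul_cancel hk]
  · have hodd : r.coeff k = -r.coeff k := by
      conv_lhs => rw [← h, ← neg_one_mul (X : R[X]), ← C_1, ← C_neg, comp_C_mul_X_coeff]
      rw [(Nat.odd_iff.mpr (Nat.two_dvd_ne_zero.mp hk)).neg_one_pow, mul_neg_one]
    have : (2 : R) * r.coeff k = 0 := by linear_combination hodd
    exact (mul_eq_zero.mp this).resolve_left two_ne_zero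

section Reflection

variable {K : Type*} [Field K] [NeZero (2 : K)]

theorem C_one_sub_C_half : (C 1 : K[X]) - C (1 / 2) = C (1 / 2) := by
  rw [← C_sub, sub_half]

theorem X_sub_C_half_sq_comp_one_sub_X :
    ((X - C (1 / 2 : K)) ^ 2).comp (C 1 - X) = (X - C (1 / 2)) ^ 2 := by
  simp only [pow_comp, sub_comp, X_comp, C_comp]
  linear_combination (C 1 - 2 * X) * C_one_sub_C_half (K := K)

theorem exists_eq_comp_X_sub_C_half_sq_of_comp_one_sub_X_eq {p : K[X]}
    (h : p.comp (C 1 - X) = p) :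
    ∃ q : K[X], p = q.comp ((X - C (1 / 2)) ^ 2) := by
  obtain ⟨q, hq⟩ : ∃ q : K[X], p.comp (X + C (1 / 2)) = q.comp (X ^ 2) := by
    refine exists_eq_comp_X_sq_of_comp_neg_X_eq ?_
    conv_lhs => rw [← h]
    simp only [comp_assoc, add_comp, sub_comp, X_comp, C_comp]
    congr 1
    linear_combination C_one_sub_C_half (K := K)
  refine ⟨q, ?_⟩
  rw [← X_pow_comp, ← comp_assoc, ← hq, comp_assoc]
  simp only [add_comp, X_comp, C_comp, sub_add_cancel, comp_X]

end Reflection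

end Polynomial

theorem phiMap_eq_comp (n : ℕ) (a : Fin n → ℂ) :
    PhiMap n a = (∏ i, (X - C (a i ^ 2))).comp ((X - C (1 / 2)) ^ 2) := by
  rw [prod_comp, PhiMap]
  refine Finset.prod_congr rfl fun i _ => ?_
  simp only [sub_comp, X_comp, C_comp, pow_comp, map_pow]
  ring

theorem sameBnOrbit_iff_exists_perm_sq_eq {n : ℕ} {a b : Fin n → ℂ} :
    SameBnOrbit n a b ↔ ∃ σ : Equiv.Perm (Fin n), ∀ i, b i ^ 2 = a (σ i) ^ 2 := by
  refine ⟨fun ⟨σ, ε, hε, hb⟩ => ⟨σ, fun i => ?_⟩, fun ⟨σ, hσ⟩ => ?_⟩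
  · rcases hε i with h | h <;> simp [hb i, h]
  · refine ⟨σ, fun i => if b i = a (σ i) then 1 else -1,
      fun i => by dsimp only; split_ifs <;> simp, fun i => ?_⟩
    dsimp only
    split_ifs with h
    · rw [h, one_mul]
    · rw [neg_one_mul]
      exact (sq_eq_sq_iff_eq_or_eq_neg.mp (hσ i)).resolve_left h

theorem statement6_general (n : ℕ) :
    (∀ a : Fin n → ℂ, (PhiMap n a).Monic ∧ (PhiMap n a).natDegree = 2 * n ∧
        (PhiMap n a).comp (C 1 - X) = PhiMap n a) ∧
    (∀ p : Polynomial ℂ, p.Monic → p.natDegree = 2 * n → p.comp (C 1 - X) = p →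
        ∃ a : Fin n → ℂ, PhiMap n a = p) ∧
    (∀ a b : Fin n → ℂ, PhiMap n a = PhiMap n b ↔ SameBnOrbit n a b) := by
  refine ⟨fun a => ?_, fun p hm hd hp => ?_, fun a b => ?_⟩
  · have h := (isMonicOfDegree_comp_X_sub_C_sq_iff (1 / 2 : ℂ) n).mpr
      (Fintype.card_fin n ▸ isMonicOfDegree_prod_X_sub_C fun i => a i ^ 2)
    rw [← phiMap_eq_comp] at h
    refine ⟨h.monic, h.natDegree_eq, ?_⟩
    rw [phiMap_eq_comp, comp_assoc, X_sub_C_half_sq_comp_one_sub_X]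
  · obtain ⟨q, rfl⟩ := exists_eq_comp_X_sub_C_half_sq_of_comp_one_sub_X_eq hp
    obtain ⟨c, rfl⟩ := exists_eq_prod_X_sub_C_of_isMonicOfDegree
      ((isMonicOfDegree_comp_X_sub_C_sq_iff _ n).mp ⟨hd, hm⟩)
    choose a ha using fun i => IsAlgClosed.exists_eq_mul_self (c i)
    exact ⟨a, by simp only [phiMap_eq_comp, ha, sq]⟩
  · have hS : ((X - C (1 / 2 : ℂ)) ^ 2).natDegree ≠ 0 := by
      rw [(isMonicOfDegree_X_sub_C_sq _).natDegree_eq]; exact two_ne_zero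
    rw [phiMap_eq_comp, phiMap_eq_comp, (comp_left_injective hS).eq_iff,
      prod_X_sub_C_eq_prod_X_sub_C_iff, eq_comm, Fin.map_univ_eq_map_univ_iff,
      sameBnOrbit_iff_exists_perm_sq_eq]

/-- `Φ_n` is a surjection from `ℂⁿ` onto the set of monic polynomials of degree
`2n` satisfying `p(z) = p(1 − z)`, and `Φ_n(a) = Φ_n(b)` if and only if `a` and `b` lie in the
same `W(B_n)`-orbit. -/
theorem statement6 (n : ℕ) (hn : 1 ≤ n) :
    (∀ a : Fin n → ℂ, (PhiMap n a).Monic ∧ (PhiMap n a).natDegree = 2 * n ∧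
        (PhiMap n a).comp (C 1 - X) = PhiMap n a) ∧
    (∀ p : Polynomial ℂ, p.Monic → p.natDegree = 2 * n → p.comp (C 1 - X) = p →
        ∃ a : Fin n → ℂ, PhiMap n a = p) ∧
    (∀ a b : Fin n → ℂ, PhiMap n a = PhiMap n b ↔ SameBnOrbit n a b) :=
  statement6_general n
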